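/- For all relations P = (A,B,R) and Q = (C,B,T), the games G_γ(P,Q) and G_1(Dom(P), Dom_γ(Q)) are dual: ONE has a winning strategy in G_γ(P,Q) if and only if TWO has a winning strategy in G_1(Dom(P), Dom_γ(Q)), and TWO has a winning strategy in G_γ(P,Q) if and only if ONE has a winning strategy in G_1(Dom(P), Dom_γ(Q)). -/

import Mathlib

open Set

/-- `GDom R` is the set of dominating families of the relation `R`:
sets `Z ⊆ B` such that every `a ∈ A` is dominated by some `b ∈ Z`. -/
def GDom {α β : Type*} (R : α → β → Prop) : Set (Set β) :=
  {Z | ∀ a : α, ∃ b ∈ Z, R a b}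

/-- A relation is total: every element of the domain is dominated by something. -/
def IsTotalRel {α β : Type*} (R : α → β → Prop) : Prop :=
  ∀ a : α, ∃ b : β, R a b

/-- The product of two relations. -/
def GProd {α β α' β' : Type*} (R : α → β → Prop) (R' : α' → β' → Prop) :
    α × α' → β × β' → Prop :=
  fun a b => R a.1 b.1 ∧ R' a.2 b.2

/-- The finite history consisting of the first `n` moves of the sequence `b`. -/
def GHist {β : Type*} (b : ℕ → β) (n : ℕ) : List β :=
  List.ofFn fun i : Fin n => b i

/-- ONE has a winning strategy in the game `G(P,Q)`: in inning `n` ONE plays `aₙ ∈ A`,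
TWO answers `bₙ` with `R aₙ bₙ`; ONE wins iff `{bₙ : n} ∈ GDom T`. -/
def OneWinsG {α β γ : Type*} (R : α → β → Prop) (T : γ → β → Prop) : Prop :=
  ∃ σ : List β → α, ∀ b : ℕ → β,
    (∀ n, R (σ (GHist b n)) (b n)) → Set.range b ∈ GDom T

/-- TWO has a winning strategy in the game `G(P,Q)`. -/
def TwoWinsG {α β γ : Type*} (R : α → β → Prop) (T : γ → β → Prop) : Prop :=
  ∃ τ : List α → β, ∀ a : ℕ → α,
    (∀ n, R (a n) (τ (GHist a (n + 1)))) ∧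
    Set.range (fun n => τ (GHist a (n + 1))) ∉ GDom T

/-- ONE has a winning strategy in the game `G₁(𝒜,ℬ)`: in inning `n` ONE plays `Aₙ ∈ 𝒜`,
TWO answers `bₙ ∈ Aₙ`; TWO wins iff `{bₙ : n} ∈ ℬ`. -/
def OneWinsG1 {β : Type*} (𝒜 ℬ : Set (Set β)) : Prop :=
  ∃ σ : List β → Set β, (∀ h, σ h ∈ 𝒜) ∧
    ∀ b : ℕ → β, (∀ n, b n ∈ σ (GHist b n)) → Set.range b ∉ ℬ

/-- TWO has a winning strategy in the game `G₁(𝒜,ℬ)`. -/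
def TwoWinsG1 {β : Type*} (𝒜 ℬ : Set (Set β)) : Prop :=
  ∃ τ : List (Set β) → β, ∀ S : ℕ → Set β, (∀ n, S n ∈ 𝒜) →
    (∀ n, τ (GHist S (n + 1)) ∈ S n) ∧
    Set.range (fun n => τ (GHist S (n + 1))) ∈ ℬ

/-- TWO has a winning strategy in the game `G_fin(𝒜,ℬ)`: in inning `n` ONE plays `Aₙ ∈ 𝒜`,
TWO answers a finite `Fₙ ⊆ Aₙ`; TWO wins iff `⋃ₙ Fₙ ∈ ℬ`. -/
def TwoWinsGfin {β : Type*} (𝒜 ℬ : Set (Set β)) : Prop :=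
  ∃ τ : List (Set β) → Set β, ∀ S : ℕ → Set β, (∀ n, S n ∈ 𝒜) →
    (∀ n, τ (GHist S (n + 1)) ⊆ S n ∧ (τ (GHist S (n + 1))).Finite) ∧
    (⋃ n, τ (GHist S (n + 1))) ∈ ℬ

/-- `(𝒜,ℬ)`-Lindelöf: every member of `𝒜` has a countable subset belonging to `ℬ`. -/
def LindelofFam {β : Type*} (𝒜 ℬ : Set (Set β)) : Prop :=
  ∀ S ∈ 𝒜, ∃ C ⊆ S, C.Countable ∧ C ∈ ℬ

/-- The selection principle `S₁(𝒜,ℬ)`. -/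
def SelS1 {β : Type*} (𝒜 ℬ : Set (Set β)) : Prop :=
  ∀ A : ℕ → Set β, (∀ n, A n ∈ 𝒜) →
    ∃ b : ℕ → β, (∀ n, b n ∈ A n) ∧ Set.range b ∈ ℬ

/-- The selection principle `S_fin(𝒜,ℬ)`. -/
def SelSfin {β : Type*} (𝒜 ℬ : Set (Set β)) : Prop :=
  ∀ A : ℕ → Set β, (∀ n, A n ∈ 𝒜) →
    ∃ F : ℕ → Set β, (∀ n, F n ⊆ A n ∧ (F n).Finite) ∧ (⋃ n, F n) ∈ ℬ

/-- `𝒪_X`: the family of open covers of `X`. -/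
def OpenCovers (X : Type*) [TopologicalSpace X] : Set (Set (Set X)) :=
  {𝒰 | (∀ U ∈ 𝒰, IsOpen U) ∧ ⋃₀ 𝒰 = Set.univ}

/-- ONE has a winning strategy in the point-open game on `X`. -/
def OneWinsPointOpen (X : Type*) [TopologicalSpace X] : Prop :=
  ∃ σ : List (Set X) → X, ∀ U : ℕ → Set X,
    (∀ n, IsOpen (U n) ∧ σ (GHist U n) ∈ U n) → Set.range U ∈ OpenCovers X

/-- TWO has a winning strategy in the point-open game on `X`. -/
def TwoWinsPointOpen (X : Type*) [TopologicalSpace X] : Prop :=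
  ∃ τ : List X → Set X, ∀ x : ℕ → X,
    (∀ n, IsOpen (τ (GHist x (n + 1))) ∧ x n ∈ τ (GHist x (n + 1))) ∧
    Set.range (fun n => τ (GHist x (n + 1))) ∉ OpenCovers X

/-- `𝔇_X`: the family of dense subsets of `X`. -/
def DenseSets (X : Type*) [TopologicalSpace X] : Set (Set X) :=
  {D | Dense D}

/-- ONE has a winning strategy in the point-picking game `G^D_ω(X)` of Berner and Juhász. -/
def OneWinsPointPicking (X : Type*) [TopologicalSpace X] : Prop :=
  ∃ σ : List X → Set X, (∀ h, IsOpen (σ h) ∧ (σ h).Nonempty) ∧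
    ∀ x : ℕ → X, (∀ n, x n ∈ σ (GHist x n)) → Dense (Set.range x)

/-- TWO has a winning strategy in the point-picking game `G^D_ω(X)`. -/
def TwoWinsPointPicking (X : Type*) [TopologicalSpace X] : Prop :=
  ∃ τ : List (Set X) → X, ∀ U : ℕ → Set X,
    (∀ n, IsOpen (U n) ∧ (U n).Nonempty) →
    (∀ n, τ (GHist U (n + 1)) ∈ U n) ∧
    ¬ Dense (Set.range fun n => τ (GHist U (n + 1)))

/-- `𝒟_X`: families of open sets whose union is dense in `X`. -/
def DenseUnionFams (X : Type*) [TopologicalSpace X] : Set (Set (Set X)) :=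
  {𝒰 | (∀ U ∈ 𝒰, IsOpen U) ∧ Dense (⋃₀ 𝒰)}

/-- ONE has a winning strategy in Tkachuk's game `θ(X)`. -/
def OneWinsTheta (X : Type*) [TopologicalSpace X] : Prop :=
  ∃ σ : List (Set X) → X, ∀ U : ℕ → Set X,
    (∀ n, IsOpen (U n) ∧ σ (GHist U n) ∈ U n) → Dense (⋃ n, U n)

/-- TWO has a winning strategy in Tkachuk's game `θ(X)`. -/
def TwoWinsTheta (X : Type*) [TopologicalSpace X] : Prop :=
  ∃ τ : List X → Set X, ∀ x : ℕ → X,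
    (∀ n, IsOpen (τ (GHist x (n + 1))) ∧ x n ∈ τ (GHist x (n + 1))) ∧
    ¬ Dense (⋃ n, τ (GHist x (n + 1)))

/-- `Ω_x`: the family of subsets of `X` having `x` in their closure. -/
def OmegaPt {X : Type*} [TopologicalSpace X] (x : X) : Set (Set X) :=
  {A | x ∈ closure A}

/-- ONE has a winning strategy in Gruenhage's game `G^c_{O,P}(X,x)`. -/
def OneWinsGruenhage {X : Type*} [TopologicalSpace X] (x : X) : Prop :=
  ∃ σ : List X → Set X, (∀ h, IsOpen (σ h) ∧ x ∈ σ h) ∧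
    ∀ y : ℕ → X, (∀ n, y n ∈ σ (GHist y n)) → x ∈ closure (Set.range y)

/-- TWO has a winning strategy in Gruenhage's game `G^c_{O,P}(X,x)`. -/
def TwoWinsGruenhage {X : Type*} [TopologicalSpace X] (x : X) : Prop :=
  ∃ τ : List (Set X) → X, ∀ V : ℕ → Set X,
    (∀ n, IsOpen (V n) ∧ x ∈ V n) →
    (∀ n, τ (GHist V (n + 1)) ∈ V n) ∧
    x ∉ closure (Set.range fun n => τ (GHist V (n + 1)))

/-- ONE has a winning strategy in the compact-open game on `X`. -/
def OneWinsCompactOpen (X : Type*) [TopologicalSpace X] : Prop :=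
  ∃ σ : List (Set X) → Set X, (∀ h, IsCompact (σ h)) ∧
    ∀ U : ℕ → Set X, (∀ n, IsOpen (U n) ∧ σ (GHist U n) ⊆ U n) →
      (⋃ n, U n) = Set.univ

/-- `⪯` is downwards `P`-compatible. -/
def DownwardsCompat {α β : Type*} (R : α → β → Prop) (le : β → β → Prop) : Prop :=
  ∀ a b₁ b₂, R a b₁ → R a b₂ → ∃ b, R a b ∧ le b b₁ ∧ le b b₂

/-- `⪯` is upwards `Q`-compatible. -/
def UpwardsCompat {γ β : Type*} (T : γ → β → Prop) (le : β → β → Prop) : Prop :=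
  ∀ c b₁ b₂, T c b₁ → le b₁ b₂ → T c b₂

/-- `⪯` is countably downwards `P`-compatible. -/
def CountablyDownwardsCompat {α β : Type*} (R : α → β → Prop) (le : β → β → Prop) : Prop :=
  ∀ a, ∀ E : Set β, E.Countable → E.Nonempty → (∀ b ∈ E, R a b) →
    ∃ b', R a b' ∧ ∀ b ∈ E, le b' b

/-- A relation is `ℵ₀`-preserving if some partial order on `B` is both upwards
compatible and countably downwards compatible with it. -/
def Aleph0Preserving {α β : Type*} (R : α → β → Prop) : Prop :=
  ∃ le : β → β → Prop, IsPartialOrder β le ∧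
    UpwardsCompat R le ∧ CountablyDownwardsCompat R le

/-- `Dom_γ(T)`: the γ-dominating sequences of the relation `T`. -/
def GDomGamma {γ β : Type*} (T : γ → β → Prop) : Set (ℕ → β) :=
  {z | ∀ c : γ, {n : ℕ | ¬ T c (z n)}.Finite}

/-- ONE has a winning strategy in the game `G_γ(P,Q)`. -/
def OneWinsGgamma {α β γ : Type*} (R : α → β → Prop) (T : γ → β → Prop) : Prop :=
  ∃ σ : List β → α, ∀ b : ℕ → β,
    (∀ n, R (σ (GHist b n)) (b n)) → b ∈ GDomGamma T

/-- TWO has a winning strategy in the game `G_γ(P,Q)`. -/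
def TwoWinsGgamma {α β γ : Type*} (R : α → β → Prop) (T : γ → β → Prop) : Prop :=
  ∃ τ : List α → β, ∀ a : ℕ → α,
    (∀ n, R (a n) (τ (GHist a (n + 1)))) ∧
    (fun n => τ (GHist a (n + 1))) ∉ GDomGamma T

/-- ONE has a winning strategy in the game `G₁(𝒜, Dom_γ(T))`. -/
def OneWinsG1gamma {β γ : Type*} (𝒜 : Set (Set β)) (T : γ → β → Prop) : Prop :=
  ∃ σ : List β → Set β, (∀ h, σ h ∈ 𝒜) ∧
    ∀ b : ℕ → β, (∀ n, b n ∈ σ (GHist b n)) → b ∉ GDomGamma T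

/-- TWO has a winning strategy in the game `G₁(𝒜, Dom_γ(T))`. -/
def TwoWinsG1gamma {β γ : Type*} (𝒜 : Set (Set β)) (T : γ → β → Prop) : Prop :=
  ∃ τ : List (Set β) → β, ∀ S : ℕ → Set β, (∀ n, S n ∈ 𝒜) →
    (∀ n, τ (GHist S (n + 1)) ∈ S n) ∧
    (fun n => τ (GHist S (n + 1))) ∈ GDomGamma T

/-- The `ℵ₀`-modification of a relation: moves become nonempty countable subsets of `B`,
dominated pointwise. -/
def CountMod {α β : Type*} (R : α → β → Prop) :
    α → {E : Set β // E.Countable ∧ E.Nonempty} → Prop :=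
  fun a E => ∀ b ∈ E.1, R a b

/-!
Each implication is proved by letting the player who has a winning strategy in one game
simulate a play of the other game alongside. A dominating family `Z` played by ONE in `G₁` is
answered by an element of `Z` dominating ONE's simulated move in `G_γ`, and a move `a` of ONE
in `G_γ` is answered by an element of a dominating family chosen by ONE's strategy in `G₁`.

The only nontrivial step turns a winning strategy `τ` of TWO in `G₁` into one for ONE in
`G_γ`. After any history there is some `a ∈ A` all of whose `R`-successors are answers of `τ`
to dominating families: otherwise choosing, for each `a`, a successor that is not such an
answer gives a dominating family whose answer under `τ` lies outside it. ONE plays this `a`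
and can then read off a dominating family to which TWO's move was the answer.
-/

section Replies
variable {X Y : Type*}

lemma GHist_succ (x : ℕ → X) (n : ℕ) : GHist x (n + 1) = GHist x n ++ [x n] := by
  rw [GHist, GHist, List.ofFn_succ']
  simp [Fin.last]

lemma forall_append_of_forall_GHist {p : X → Prop} {q : List X → X → Prop}
    (h : ∀ s : ℕ → X, (∀ n, p (s n)) → ∀ n, q (GHist s n) (s n))
    {l : List X} (hl : ∀ y ∈ l, p y) {x : X} (hx : p x) : q l x := by
  let s : ℕ → X := fun n => l[n]?.getD x
  have hs : ∀ n, p (s n) := by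
    intro n
    rcases lt_or_ge n l.length with hn | hn
    · simpa [s, List.getElem?_eq_getElem hn] using hl _ (List.getElem_mem hn)
    · simpa [s, List.getElem?_eq_none hn] using hx
  have hGHist : GHist s l.length = l :=
    List.ext_getElem (by simp [GHist]) fun i hi _ => by simp [GHist, s]
  have hlast : s l.length = x := by simp [s]
  simpa [hGHist, hlast] using h s hs l.length

/-- Strategies see only the opponent's moves: `replies step l` recomputes the player's own
moves against `l` when each of them is given by `step` from the player's previous moves and the
opponent's current move. -/
def replies (step : List Y → X → Y) (l : List X) : List Y :=
  l.foldl (fun h x => h ++ [step h x]) []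

lemma replies_append_singleton (step : List Y → X → Y) (l : List X) (x : X) :
    replies step (l ++ [x]) = replies step l ++ [step (replies step l) x] := by
  simp [replies]

def replySeq (step : List Y → X → Y) (x : ℕ → X) (n : ℕ) : Y :=
  step (replies step (GHist x n)) (x n)

lemma replies_GHist (step : List Y → X → Y) (x : ℕ → X) (n : ℕ) :
    replies step (GHist x n) = GHist (replySeq step x) n := by
  induction n with
  | zero => simp [GHist, replies]
  | succ n ih => rw [GHist_succ, GHist_succ, replies_append_singleton, ih, replySeq, ih]

lemma replySeq_eq (step : List Y → X → Y) (x : ℕ → X) (n : ℕ) :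
    replySeq step x n = step (GHist (replySeq step x) n) (x n) := by
  rw [replySeq, replies_GHist]

lemma exists_strategy_eq_replySeq [Nonempty Y] (step : List Y → X → Y) :
    ∃ τ : List X → Y, ∀ x n, τ (GHist x (n + 1)) = replySeq step x n :=
  ⟨fun l => (replies step l).getLastD (Classical.arbitrary Y), fun x n => by
    show (replies step _).getLastD _ = _
    rw [replies_GHist, GHist_succ, List.getLastD_concat]⟩

end Replies

section Duality
variable {α β γ : Type*} {R : α → β → Prop} {T : γ → β → Prop}

lemma GDom.exists_setOf_subset_image {g : Set β → β} (hg : ∀ S ∈ GDom R, g S ∈ S) :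
    ∃ a, {b | R a b} ⊆ g '' GDom R := by
  by_contra! hcon
  choose f hfR hf using fun a => Set.not_subset.mp (hcon a)
  have hdom : Set.range f ∈ GDom R := fun a => ⟨f a, ⟨a, rfl⟩, hfR a⟩
  obtain ⟨a, ha⟩ := hg _ hdom
  exact hf a ⟨_, hdom, ha.symm⟩

lemma twoWinsG1gamma_of_oneWinsGgamma [Nonempty β] :
    OneWinsGgamma R T → TwoWinsG1gamma (GDom R) T := by
  rintro ⟨σ, hσ⟩
  let step : List β → Set β → β := fun hb S => Classical.epsilon fun b => b ∈ S ∧ R (σ hb) b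
  obtain ⟨τ, hτ⟩ := exists_strategy_eq_replySeq step
  refine ⟨τ, fun S hS => ?_⟩
  have hb : ∀ n, replySeq step S n ∈ S n ∧
      R (σ (GHist (replySeq step S) n)) (replySeq step S n) := fun n => by
    rw [replySeq_eq]
    exact Classical.epsilon_spec (hS n _)
  simp only [hτ]
  exact ⟨fun n => (hb n).1, hσ _ fun n => (hb n).2⟩

lemma twoWinsGgamma_of_oneWinsG1gamma [Nonempty β] :
    OneWinsG1gamma (GDom R) T → TwoWinsGgamma R T := by
  rintro ⟨σ, hσdom, hσ⟩
  let step : List β → α → β := fun hb a => (hσdom hb a).choose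
  obtain ⟨τ, hτ⟩ := exists_strategy_eq_replySeq step
  refine ⟨τ, fun a => ?_⟩
  have hb : ∀ n, replySeq step a n ∈ σ (GHist (replySeq step a) n) ∧
      R (a n) (replySeq step a n) := fun n => by
    rw [replySeq_eq]
    exact (hσdom _ (a n)).choose_spec
  simp only [hτ]
  exact ⟨fun n => (hb n).2, hσ _ fun n => (hb n).1⟩

lemma oneWinsG1gamma_of_twoWinsGgamma [Nonempty α] :
    TwoWinsGgamma R T → OneWinsG1gamma (GDom R) T := by
  rintro ⟨τ, hτ⟩
  have hlegal : ∀ (l : List α) (a : α), R a (τ (l ++ [a])) := fun l a =>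
    forall_append_of_forall_GHist (p := fun _ => True) (q := fun l a => R a (τ (l ++ [a])))
      (fun s _ n => by simpa only [GHist_succ] using (hτ s).1 n) (by simp) trivial
  -- ONE reconstructs a play of `G_γ` in which TWO's strategy produced the moves seen so far.
  let step : List α → β → α := fun la b => Classical.epsilon fun a => τ (la ++ [a]) = b
  refine ⟨fun l => Set.range fun a => τ (replies step l ++ [a]),
    fun l a => ⟨_, ⟨a, rfl⟩, hlegal _ a⟩, fun b hb => ?_⟩
  have hplay : ∀ n, τ (GHist (replySeq step b) (n + 1)) = b n := fun n => by
    have hbn := hb n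
    rw [Set.mem_range, replies_GHist] at hbn
    rw [GHist_succ, replySeq_eq]
    exact Classical.epsilon_spec hbn
  simpa only [hplay] using (hτ (replySeq step b)).2

lemma oneWinsGgamma_of_twoWinsG1gamma [Nonempty α] :
    TwoWinsG1gamma (GDom R) T → OneWinsGgamma R T := by
  rintro ⟨τ, hτ⟩
  have hlegal : ∀ h : List (Set β), (∀ S ∈ h, S ∈ GDom R) →
      ∀ S ∈ GDom R, τ (h ++ [S]) ∈ S := fun h hh S hS =>
    forall_append_of_forall_GHist (q := fun l S => τ (l ++ [S]) ∈ S)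
      (fun s hs n => by simpa only [GHist_succ] using (hτ s hs).1 n) hh hS
  let pick : List (Set β) → α := fun h =>
    Classical.epsilon fun a => {b | R a b} ⊆ (fun S => τ (h ++ [S])) '' GDom R
  let step : List (Set β) → β → Set β := fun h b =>
    Classical.epsilon fun S => S ∈ GDom R ∧ τ (h ++ [S]) = b
  refine ⟨fun l => pick (replies step l), fun b hb => ?_⟩
  set S := replySeq step b
  have hstep : ∀ n, (∀ m < n, S m ∈ GDom R) → S n ∈ GDom R ∧ τ (GHist S (n + 1)) = b n := by
    intro n hn
    have hh : ∀ S' ∈ GHist S n, S' ∈ GDom R := by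
      simp only [GHist, List.mem_ofFn]
      rintro _ ⟨i, rfl⟩
      exact hn i i.2
    have hpick : {b' | R (pick (GHist S n)) b'} ⊆ (fun S' => τ (GHist S n ++ [S'])) '' GDom R :=
      Classical.epsilon_spec (GDom.exists_setOf_subset_image (hlegal _ hh))
    have hbn : R (pick (replies step (GHist b n))) (b n) := hb n
    rw [replies_GHist] at hbn
    rw [GHist_succ, show S n = step (GHist S n) (b n) from replySeq_eq step b n]
    exact Classical.epsilon_spec (hpick hbn)
  have hdom : ∀ n, S n ∈ GDom R := fun n =>
    Nat.strong_induction_on n fun n ih => (hstep n ih).1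
  simpa only [fun n => (hstep n fun m _ => hdom m).2] using (hτ S hdom).2

end Duality

theorem statement16_general {α β γ : Type*} [Nonempty α]
    (R : α → β → Prop) (T : γ → β → Prop)
    (hR : IsTotalRel R) :
    (OneWinsGgamma R T ↔ TwoWinsG1gamma (GDom R) T) ∧
    (TwoWinsGgamma R T ↔ OneWinsG1gamma (GDom R) T) := by
  obtain ⟨b, -⟩ := hR (Classical.arbitrary α)
  have : Nonempty β := ⟨b⟩
  exact ⟨⟨twoWinsG1gamma_of_oneWinsGgamma, oneWinsGgamma_of_twoWinsG1gamma⟩,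
    ⟨oneWinsG1gamma_of_twoWinsGgamma, twoWinsGgamma_of_oneWinsG1gamma⟩⟩

/-- For all relations `P = (A,B,R)` and `Q = (C,B,T)`, the games
`G_γ(P,Q)` and `G₁(Dom(P), Dom_γ(Q))` are dual. -/
theorem statement16 {α β γ : Type*} [Nonempty α] [Nonempty γ]
    (R : α → β → Prop) (T : γ → β → Prop)
    (hR : IsTotalRel R) (hT : IsTotalRel T) :
    (OneWinsGgamma R T ↔ TwoWinsG1gamma (GDom R) T) ∧
    (TwoWinsGgamma R T ↔ OneWinsG1gamma (GDom R) T) :=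
  statement16_general R T hR
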